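/- Let K be a field and let A be a skew PBW extension of K in variables x_1, …, x_n such that A is a K-algebra (k·a = a·k for all k ∈ K, a ∈ A), and let c_{i,j} ∈ K ∖ {0} (1 ≤ i < j ≤ n) be the constants with x_j x_i − c_{i,j} x_i x_j ∈ K + Kx_1 + ⋯ + Kx_n. Regard A as a finitely semi-graded K-algebra with A_k the K-span of the monomials x^α with |α| = k, and let P(A) be its set of isomorphism classes of point modules and ∼ the relation [M] ∼ [M'] iff Gr(M) ≅ Gr(M') as graded Gr(A)-modules. Then there exists an injective function from P(A)/∼ into the set X_2 := {([v],[w]) ∈ ℙ^{n−1}(K) × ℙ^{n−1}(K) : v_j w_i = c_{i,j} v_i w_j for all 1 ≤ i < j ≤ n}; in particular there exists m_0 ≥ 1 (namely m_0 = 2) and an injective function from P(A)/∼ to X_{m_0}. -/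

import Mathlib

universe u v

section

variable {K : Type u} {B : Type v} [Field K] [Ring B] [Algebra K B]

/-- The standard filtration `F_n = (deg 0) ⊕ ⋯ ⊕ (deg n)` associated to a
semi-graduation of a `K`-module. -/
def sgFilt {M : Type*} [AddCommGroup M] [Module K M]
    (deg : ℕ → Submodule K M) (n : ℕ) : Submodule K M :=
  ⨆ k ∈ Set.Iic n, deg k

/-- `F_{n−1}`, with `F_{−1} = 0`. -/
def sgFiltPrev {M : Type*} [AddCommGroup M] [Module K M]
    (deg : ℕ → Submodule K M) : ℕ → Submodule K M
  | 0 => ⊥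
  | (n + 1) => sgFilt deg n

/-- A point module for a finitely semi-graded `K`-algebra `B` with semi-graduation
`Bdeg`. -/
structure SGPointModule (Bdeg : ℕ → Submodule K B) where
  M : Type v
  [acg : AddCommGroup M]
  [modK : Module K M]
  [modB : Module B M]
  [tower : IsScalarTower K B M]
  deg : ℕ → Submodule K M
  internal : DirectSum.IsInternal deg
  smul_le : ∀ p q : ℕ, ∀ b ∈ Bdeg p, ∀ v ∈ deg q, b • v ∈ ⨆ k ∈ Set.Iic (p + q), deg k
  cyclic : ∃ v ∈ deg 0, Submodule.span B {v} = ⊤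
  dim_one : ∀ n : ℕ, Module.finrank K (deg n) = 1

attribute [instance] SGPointModule.acg SGPointModule.modK SGPointModule.modB
  SGPointModule.tower

/-- The degree-`n` piece `F_n(M)/F_{n−1}(M)` of the associated graded module of a
point module. -/
abbrev SGPointModule.GrQuot {Bdeg : ℕ → Submodule K B} (P : SGPointModule Bdeg) (n : ℕ) :=
  (sgFilt P.deg n) ⧸ ((sgFiltPrev P.deg n).comap (sgFilt P.deg n).subtype)

/-- `Gr(M) ≅ Gr(M')` as graded `Gr(B)`-modules: a family of `K`-linear isomorphisms
`F_n(M)/F_{n−1}(M) ≃ F_n(M')/F_{n−1}(M')` compatible with the `Gr(B)`-action induced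
by the `B`-action on representatives. -/
def SGPointModule.GrIso {Bdeg : ℕ → Submodule K B} (P P' : SGPointModule Bdeg) : Prop :=
  ∃ g : ∀ n : ℕ, P.GrQuot n ≃ₗ[K] P'.GrQuot n,
    ∀ (p n : ℕ) (b : B) (hb : b ∈ sgFilt Bdeg p) (m : P.M) (hm : m ∈ sgFilt P.deg n)
      (m' : P'.M) (hm' : m' ∈ sgFilt P'.deg n),
      g n (Submodule.Quotient.mk ⟨m, hm⟩) = Submodule.Quotient.mk ⟨m', hm'⟩ →
      ∀ (h₁ : b • m ∈ sgFilt P.deg (p + n)) (h₂ : b • m' ∈ sgFilt P'.deg (p + n)),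
        g (p + n) (Submodule.Quotient.mk ⟨b • m, h₁⟩) =
          Submodule.Quotient.mk ⟨b • m', h₂⟩

end

/-- The ordered monomial `x₁^{α₁} ⋯ xₙ^{αₙ}`. -/
def skewPBWMonomial {A : Type*} [Ring A] {n : ℕ} (x : Fin n → A) (α : Fin n → ℕ) : A :=
  (List.ofFn fun i => x i ^ α i).prod

/-- The semi-graduation of a skew PBW extension of the field `K`: `A_k` is the `K`-span
of the standard monomials of total degree `k`. -/
def skewPBWDegK (K : Type u) {A : Type v} [Field K] [Ring A] [Algebra K A] {n : ℕ}
    (x : Fin n → A) (k : ℕ) : Submodule K A :=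
  Submodule.span K {a | ∃ α : Fin n → ℕ, (∑ i, α i) = k ∧ a = skewPBWMonomial x α}

/-!
The graded pieces `F_N(M)/F_{N-1}(M)` of a point module are one-dimensional, spanned by the
class of a basis vector `e_N ∈ M_N`, and `x_i e_k ≡ v⁽ᵏ⁾_i e_{k+1}` modulo `F_k(M)`. Acting on `e_k`
with `x_j x_i - c_{ij} x_i x_j ∈ F_1(A)` shows `(v⁽ᵏ⁺¹⁾, v⁽ᵏ⁾) ∈ X₂`, and `v⁽ᵏ⁾ ≠ 0` because
`M` is generated by `M_0`. For fixed `w ≠ 0` the equations of `X₂` determine `v` up to a scalar,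
so the whole point sequence `([v⁽ᵏ⁾])ₖ` is determined by `[v⁽⁰⁾]`. Finally `Gr(M) ≅ Gr(M')` iff the
point sequences agree projectively: since a monomial of degree `p + 1` is some `x_i` times a
monomial of degree `p`, the leading coefficient of `b e_q` for `b ∈ F_p(A)` rescales by the
product of the proportionality factors of the points `q, …, p + q - 1`. Hence
`[M] ↦ ([v⁽¹⁾], [v⁽⁰⁾])` is well defined and injective on `P(A)/∼`.
-/

section Filtration

variable {K M : Type*} [Field K] [AddCommGroup M] [Module K M] (deg : ℕ → Submodule K M)

theorem sgFilt_mono {m n : ℕ} (h : m ≤ n) : sgFilt deg m ≤ sgFilt deg n :=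
  biSup_mono fun _ hk => le_trans hk h

theorem le_sgFilt {k n : ℕ} (h : k ≤ n) : deg k ≤ sgFilt deg n :=
  le_biSup deg h

@[simp]
theorem sgFiltPrev_succ (n : ℕ) : sgFiltPrev deg (n + 1) = sgFilt deg n := rfl

theorem sgFilt_le_sgFiltPrev {k n : ℕ} (h : k < n) : sgFilt deg k ≤ sgFiltPrev deg n := by
  obtain ⟨n, rfl⟩ := Nat.exists_eq_add_one_of_ne_zero (Nat.ne_zero_of_lt h)
  exact sgFilt_mono deg (Nat.le_of_lt_succ h)

theorem sgFilt_eq_sgFiltPrev_sup (n : ℕ) : sgFilt deg n = sgFiltPrev deg n ⊔ deg n := by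
  refine le_antisymm (iSup₂_le fun k hk => ?_) (sup_le ?_ (le_sgFilt deg le_rfl))
  · rcases (Set.mem_Iic.mp hk).lt_or_eq with hlt | rfl
    · exact le_sup_of_le_left ((le_sgFilt deg le_rfl).trans (sgFilt_le_sgFiltPrev deg hlt))
    · exact le_sup_right
  · cases n with
    | zero => exact bot_le
    | succ n => exact sgFilt_mono deg n.le_succ

end Filtration

namespace SGPointModule

variable {K : Type u} {B : Type v} [Field K] [Ring B] [Algebra K B] {Bdeg : ℕ → Submodule K B}
  (P : SGPointModule Bdeg)

theorem smul_mem_sgFilt {p q : ℕ} {b : B} (hb : b ∈ sgFilt Bdeg p) {m : P.M}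
    (hm : m ∈ sgFilt P.deg q) : b • m ∈ sgFilt P.deg (p + q) := by
  -- `b • m` is bilinear, so it suffices to take `b ∈ Bdeg j` and `m ∈ P.deg k`
  have hdeg : ∀ k ≤ q, ∀ m ∈ P.deg k, b • m ∈ sgFilt P.deg (p + q) := fun k hk m hm =>
    (iSup₂_le fun j hj b' hb' => sgFilt_mono P.deg (by simp only [Set.mem_Iic] at hj; omega)
        (P.smul_le j k b' hb' m hm) :
      sgFilt Bdeg p ≤ (sgFilt P.deg (p + q)).comap
        ((LinearMap.toSpanSingleton B P.M m).restrictScalars K)) hb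
  exact (iSup₂_le fun k hk => hdeg k hk :
    sgFilt P.deg q ≤ (sgFilt P.deg (p + q)).comap (DistribSMul.toLinearMap K P.M b)) hm

theorem smul_mem_sgFiltPrev {p q : ℕ} {b : B} (hb : b ∈ sgFilt Bdeg p) {m : P.M}
    (hm : m ∈ sgFiltPrev P.deg q) : b • m ∈ sgFiltPrev P.deg (p + q) := by
  cases q with
  | zero => simp_all [sgFiltPrev]
  | succ q => exact P.smul_mem_sgFilt hb hm

noncomputable def basis : Module.Basis (Σ _ : ℕ, Unit) K P.M :=
  P.internal.collectedBasis fun N => Module.basisUnique Unit (P.dim_one N)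

noncomputable def basisVec (N : ℕ) : P.M := P.basis ⟨N, ()⟩

noncomputable def coeff (N : ℕ) : P.M →ₗ[K] K := P.basis.coord ⟨N, ()⟩

theorem basisVec_mem (N : ℕ) : P.basisVec N ∈ P.deg N :=
  P.internal.collectedBasis_mem (α := fun _ => Unit) _ ⟨N, ()⟩

theorem basisVec_mem_sgFilt (N : ℕ) : P.basisVec N ∈ sgFilt P.deg N :=
  le_sgFilt P.deg le_rfl (P.basisVec_mem N)

@[simp]
theorem coeff_basisVec (N : ℕ) : P.coeff N (P.basisVec N) = 1 := by
  simp [coeff, basisVec]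

theorem coeff_eq_zero_of_mem_deg {j N : ℕ} (h : j ≠ N) {m : P.M} (hm : m ∈ P.deg j) :
    P.coeff N m = 0 := by
  rw [coeff, Module.Basis.coord_apply]
  exact P.internal.collectedBasis_repr_of_mem_ne _ h hm

theorem eq_coeff_smul_basisVec {N : ℕ} {m : P.M} (hm : m ∈ P.deg N) :
    m = P.coeff N m • P.basisVec N := by
  have hne : (⟨P.basisVec N, P.basisVec_mem N⟩ : P.deg N) ≠ 0 :=
    fun h => P.basis.ne_zero ⟨N, ()⟩ (congrArg Subtype.val h)
  obtain ⟨a, ha⟩ := (finrank_eq_one_iff_of_nonzero' _ hne).mp (P.dim_one N) ⟨m, hm⟩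
  obtain rfl : a • P.basisVec N = m := congrArg Subtype.val ha
  simp

theorem coeff_eq_zero_of_mem_sgFiltPrev {N : ℕ} {m : P.M} (hm : m ∈ sgFiltPrev P.deg N) :
    P.coeff N m = 0 := by
  cases N with
  | zero => simp_all [sgFiltPrev]
  | succ N =>
    exact (iSup₂_le fun j hj m hm => P.coeff_eq_zero_of_mem_deg
      (by simp only [Set.mem_Iic] at hj; omega) hm : sgFilt P.deg N ≤ LinearMap.ker _) hm

theorem sub_coeff_smul_mem_sgFiltPrev {N : ℕ} {m : P.M} (hm : m ∈ sgFilt P.deg N) :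
    m - P.coeff N m • P.basisVec N ∈ sgFiltPrev P.deg N := by
  rw [sgFilt_eq_sgFiltPrev_sup] at hm
  obtain ⟨f, hf, d, hd, rfl⟩ := Submodule.mem_sup.mp hm
  rwa [map_add, P.coeff_eq_zero_of_mem_sgFiltPrev hf, zero_add,
    ← P.eq_coeff_smul_basisVec hd, add_sub_cancel_right]

theorem coeff_smul {p q : ℕ} {b : B} (hb : b ∈ sgFilt Bdeg p) {m : P.M}
    (hm : m ∈ sgFilt P.deg q) :
    P.coeff (p + q) (b • m) = P.coeff q m * P.coeff (p + q) (b • P.basisVec q) := by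
  have h := P.coeff_eq_zero_of_mem_sgFiltPrev
    (P.smul_mem_sgFiltPrev hb (P.sub_coeff_smul_mem_sgFiltPrev hm))
  rwa [smul_sub, smul_comm b (P.coeff q m), map_sub, LinearMap.map_smul, sub_eq_zero,
    smul_eq_mul] at h

noncomputable def grBasisVec (N : ℕ) : P.GrQuot N :=
  Submodule.Quotient.mk ⟨P.basisVec N, P.basisVec_mem_sgFilt N⟩

theorem mk_eq_coeff_smul_grBasisVec {N : ℕ} {m : P.M} (hm : m ∈ sgFilt P.deg N) :
    (Submodule.Quotient.mk ⟨m, hm⟩ : P.GrQuot N) = P.coeff N m • P.grBasisVec N := by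
  rw [grBasisVec, ← Submodule.Quotient.mk_smul, Submodule.Quotient.eq]
  exact P.sub_coeff_smul_mem_sgFiltPrev hm

theorem grBasisVec_ne_zero (N : ℕ) : P.grBasisVec N ≠ 0 := by
  rw [grBasisVec, Ne, Submodule.Quotient.mk_eq_zero]
  intro h
  simpa using P.coeff_eq_zero_of_mem_sgFiltPrev h

noncomputable def grQuotEquiv (N : ℕ) : K ≃ₗ[K] P.GrQuot N :=
  LinearEquiv.ofBijective (LinearMap.toSpanSingleton K _ (P.grBasisVec N))
    ⟨smul_left_injective K (P.grBasisVec_ne_zero N), fun q => by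
      obtain ⟨⟨m, hm⟩, rfl⟩ := Submodule.Quotient.mk_surjective _ q
      exact ⟨P.coeff N m, (P.mk_eq_coeff_smul_grBasisVec hm).symm⟩⟩

theorem grQuotEquiv_symm_mk {N : ℕ} {m : P.M} (hm : m ∈ sgFilt P.deg N) :
    (P.grQuotEquiv N).symm (Submodule.Quotient.mk ⟨m, hm⟩) = P.coeff N m := by
  rw [LinearEquiv.symm_apply_eq, P.mk_eq_coeff_smul_grBasisVec hm]
  rfl

end SGPointModule

section Monomials

variable {K : Type u} {A : Type v} [Field K] [Ring A] [Algebra K A]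

theorem skewPBWMonomial_zero {n : ℕ} (x : Fin n → A) : skewPBWMonomial x 0 = 1 :=
  List.prod_eq_one fun a ha => by
    obtain ⟨i, rfl⟩ := List.mem_ofFn.mp ha
    simp

theorem skewPBWMonomial_succ {n : ℕ} (x : Fin (n + 1) → A) (α : Fin (n + 1) → ℕ) :
    skewPBWMonomial x α =
      x 0 ^ α 0 * skewPBWMonomial (fun i => x i.succ) (fun i => α i.succ) := by
  simp [skewPBWMonomial, List.ofFn_succ]

theorem exists_skewPBWMonomial_eq_mul {n : ℕ} (x : Fin n → A) (α : Fin n → ℕ) {p : ℕ}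
    (hα : ∑ i, α i = p + 1) :
    ∃ i β, ∑ i, β i = p ∧ skewPBWMonomial x α = x i * skewPBWMonomial x β := by
  induction n generalizing p with
  | zero => simp at hα
  | succ n ih =>
    rw [Fin.sum_univ_succ] at hα
    rcases h0 : α 0 with _ | k
    · obtain ⟨i, β, hβ, hmul⟩ := ih (fun i => x i.succ) (fun i => α i.succ) (p := p) (by omega)
      refine ⟨i.succ, Fin.cons 0 β, by simpa [Fin.sum_univ_succ] using hβ, ?_⟩
      rw [skewPBWMonomial_succ, skewPBWMonomial_succ x, h0, hmul]
      simp
    · refine ⟨0, Fin.cons k fun i => α i.succ, ?_, ?_⟩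
      · simp only [Fin.sum_univ_succ, Fin.cons_zero, Fin.cons_succ]
        omega
      · rw [skewPBWMonomial_succ, skewPBWMonomial_succ x, h0, pow_succ', mul_assoc]
        simp

theorem skewPBWMonomial_single {n : ℕ} (x : Fin n → A) (i : Fin n) :
    skewPBWMonomial x (Pi.single i 1) = x i := by
  induction n with
  | zero => exact i.elim0
  | succ n ih =>
    rw [skewPBWMonomial_succ]
    cases i using Fin.cases with
    | zero =>
      have htail : (fun j : Fin n => (Pi.single 0 1 : Fin (n + 1) → ℕ) j.succ) = 0 := by
        funext j
        simp
      rw [htail, skewPBWMonomial_zero]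
      simp
    | succ i =>
      have htail : (fun j : Fin n => (Pi.single i.succ 1 : Fin (n + 1) → ℕ) j.succ) =
          Pi.single i 1 := by
        funext j
        simp [Pi.single_apply]
      simp [htail, ih]

theorem skewPBWDegK_zero_le_span_one {n : ℕ} (x : Fin n → A) :
    skewPBWDegK K x 0 ≤ K ∙ (1 : A) := by
  refine Submodule.span_le.mpr ?_
  rintro _ ⟨α, hα, rfl⟩
  obtain rfl : α = 0 := funext fun i => Finset.sum_eq_zero_iff.mp hα i (Finset.mem_univ i)
  rw [skewPBWMonomial_zero]
  exact Submodule.mem_span_singleton_self 1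

theorem skewPBWMonomial_mem_skewPBWDegK {n : ℕ} (x : Fin n → A) (α : Fin n → ℕ) :
    skewPBWMonomial x α ∈ skewPBWDegK K x (∑ i, α i) :=
  Submodule.subset_span ⟨α, rfl, rfl⟩

theorem x_mem_sgFilt_one {n : ℕ} (x : Fin n → A) (i : Fin n) :
    x i ∈ sgFilt (skewPBWDegK K x) 1 := by
  have h := skewPBWMonomial_mem_skewPBWDegK (K := K) x (Pi.single i 1)
  rw [skewPBWMonomial_single, Finset.sum_pi_single'] at h
  exact le_sgFilt _ le_rfl (by simpa using h)

theorem mem_sgFilt_one_of_mem_span {n : ℕ} (x : Fin n → A) {r : A}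
    (hr : r ∈ Submodule.span K ({1} ∪ Set.range x)) : r ∈ sgFilt (skewPBWDegK K x) 1 := by
  refine Submodule.span_le.mpr ?_ hr
  rintro _ (rfl | ⟨i, rfl⟩)
  · have h := skewPBWMonomial_mem_skewPBWDegK (K := K) x 0
    rw [skewPBWMonomial_zero] at h
    exact le_sgFilt _ zero_le_one (by simpa using h)
  · exact x_mem_sgFilt_one x i

theorem smul_mem_of_forall_x_smul_mem {R M : Type*} [CommSemiring R] [Algebra R A]
    [AddCommMonoid M] [Module A M] [Module R M] [IsScalarTower R A M] {n : ℕ} (x : Fin n → A)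
    (hspan : Submodule.span R (Set.range (skewPBWMonomial x)) = ⊤) {N : Submodule R M}
    (hN : ∀ i, ∀ m ∈ N, x i • m ∈ N) (b : A) {m : M} (hm : m ∈ N) : b • m ∈ N := by
  let S : Subalgebra R A :=
    { carrier := {b | ∀ m ∈ N, b • m ∈ N}
      mul_mem' := fun ha hb m hm => by rw [mul_smul]; exact ha _ (hb m hm)
      add_mem' := fun ha hb m hm => by rw [add_smul]; exact N.add_mem (ha m hm) (hb m hm)
      algebraMap_mem' := fun k m hm => by rw [algebraMap_smul]; exact N.smul_mem k hm }
  have hmono : Set.range (skewPBWMonomial x) ⊆ Subalgebra.toSubmodule S := by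
    rintro _ ⟨α, rfl⟩
    refine S.list_prod_mem fun a ha => ?_
    obtain ⟨i, rfl⟩ := List.mem_ofFn.mp ha
    exact S.pow_mem (hN i) _
  exact Submodule.span_le.mpr hmono (hspan ▸ Submodule.mem_top) m hm

end Monomials

section SkewCompatible

variable {K : Type u} [Field K] {n : ℕ}

/-- The defining equations of `X₂`: `([v], [w]) ∈ X₂` iff `SkewCompatible c v w`. -/
def SkewCompatible (c : Fin n → Fin n → K) (v w : Fin n → K) : Prop :=
  ∀ i j : Fin n, i < j → v j * w i = c i j * (v i * w j)

variable {c : Fin n → Fin n → K} {u v v' w : Fin n → K}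

theorem SkewCompatible.eq_zero_of_apply_eq_zero (hc : ∀ i j : Fin n, i < j → c i j ≠ 0)
    (hu : SkewCompatible c u w) {i₀ : Fin n} (hw : w i₀ ≠ 0) (hu₀ : u i₀ = 0) : u = 0 := by
  funext j
  rcases lt_trichotomy j i₀ with h | rfl | h
  · have := hu j i₀ h
    simp_all
  · exact hu₀
  · have := hu i₀ j h
    simp_all

theorem SkewCompatible.of_smul_right {a : K} (ha : a ≠ 0) (h : SkewCompatible c v (a • w)) :
    SkewCompatible c v w := fun i j hij => by
  have := h i j hij
  simp only [Pi.smul_apply, smul_eq_mul] at this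
  apply mul_left_cancel₀ ha
  linear_combination this

theorem SkewCompatible.exists_eq_smul (hc : ∀ i j : Fin n, i < j → c i j ≠ 0)
    (hv : SkewCompatible c v w) (hv' : SkewCompatible c v' w) (hw : w ≠ 0) (hv₀ : v ≠ 0) :
    ∃ a : K, v' = a • v := by
  obtain ⟨i₀, hwi₀⟩ := Function.ne_iff.mp hw
  have hvi₀ : v i₀ ≠ 0 := fun h => hv₀ (hv.eq_zero_of_apply_eq_zero hc hwi₀ h)
  have hcomb : SkewCompatible c (v i₀ • v' - v' i₀ • v) w := fun i j hij => by
    simp only [Pi.sub_apply, Pi.smul_apply, smul_eq_mul]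
    linear_combination v i₀ * hv' i j hij - v' i₀ * hv i j hij
  have hzero := hcomb.eq_zero_of_apply_eq_zero hc hwi₀ (by simp [mul_comm])
  refine ⟨v' i₀ / v i₀, ?_⟩
  rw [sub_eq_zero] at hzero
  rw [div_eq_inv_mul, mul_smul, ← hzero, inv_smul_smul₀ hvi₀]

end SkewCompatible

namespace SGPointModule

variable {K : Type u} {A : Type v} [Field K] [Ring A] [Algebra K A] {n : ℕ} {x : Fin n → A}
  (P P' : SGPointModule (skewPBWDegK K x))

/-- Coordinates of the `k`-th point of the point sequence of `P`:
`x i • e_k ≡ pointSeq k i • e_{k+1}` modulo `F_k(M)`. -/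
noncomputable def pointSeq (k : ℕ) : Fin n → K :=
  fun i => P.coeff (k + 1) (x i • P.basisVec k)

theorem x_smul_mem_sgFilt (i : Fin n) {k : ℕ} {m : P.M} (hm : m ∈ sgFilt P.deg k) :
    x i • m ∈ sgFilt P.deg (k + 1) :=
  add_comm 1 k ▸ P.smul_mem_sgFilt (x_mem_sgFilt_one x i) hm

theorem coeff_x_smul (i : Fin n) {k : ℕ} {m : P.M} (hm : m ∈ sgFilt P.deg k) :
    P.coeff (k + 1) (x i • m) = P.coeff k m * P.pointSeq k i := by
  have h := P.coeff_smul (x_mem_sgFilt_one x i) hm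
  rwa [add_comm 1 k] at h

theorem pointSeq_skewCompatible (c : Fin n → Fin n → K)
    (hrel : ∀ i j : Fin n, i < j →
      x j * x i - c i j • (x i * x j) ∈ Submodule.span K ({(1 : A)} ∪ Set.range x))
    (k : ℕ) : SkewCompatible c (P.pointSeq (k + 1)) (P.pointSeq k) := fun i j hij => by
  have hzero := P.coeff_eq_zero_of_mem_sgFiltPrev
    (P.smul_mem_sgFiltPrev (mem_sgFilt_one_of_mem_span x (hrel i j hij))
      ((sgFiltPrev_succ P.deg k).symm ▸ P.basisVec_mem_sgFilt k))
  have hx : ∀ i, x i • P.basisVec k ∈ sgFilt P.deg (k + 1) :=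
    fun i => P.x_smul_mem_sgFilt i (P.basisVec_mem_sgFilt k)
  rw [add_comm, sub_smul, mul_smul, smul_assoc, mul_smul, map_sub, LinearMap.map_smul,
    P.coeff_x_smul j (hx i), P.coeff_x_smul i (hx j)] at hzero
  simp only [pointSeq, smul_eq_mul] at hzero ⊢
  linear_combination hzero

theorem pointSeq_ne_zero (hspan : Submodule.span K (Set.range (skewPBWMonomial x)) = ⊤)
    (k : ℕ) : P.pointSeq k ≠ 0 := by
  intro hk
  have hx : ∀ i, x i • P.basisVec k ∈ sgFilt P.deg k := fun i => by
    simpa [show P.coeff (k + 1) (x i • P.basisVec k) = 0 from congrFun hk i] using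
      P.sub_coeff_smul_mem_sgFiltPrev (P.x_smul_mem_sgFilt i (P.basisVec_mem_sgFilt k))
  -- then `F_k(M)` is stable under every `x i`, hence under `A`; it contains the generator of
  -- `M` but not `e_{k+1}`
  have hstable : ∀ i, ∀ m ∈ sgFilt P.deg k, x i • m ∈ sgFilt P.deg k := fun i m hm => by
    rw [sgFilt_eq_sgFiltPrev_sup] at hm
    obtain ⟨f, hf, d, hd, rfl⟩ := Submodule.mem_sup.mp hm
    rw [smul_add, P.eq_coeff_smul_basisVec hd, smul_comm]
    refine add_mem ?_ (Submodule.smul_mem _ _ (hx i))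
    cases k with
    | zero => simp_all [sgFiltPrev]
    | succ k => exact add_comm 1 k ▸ P.smul_mem_sgFilt (x_mem_sgFilt_one x i) hf
  obtain ⟨v, hv, hgen⟩ := P.cyclic
  obtain ⟨b, hb⟩ := Submodule.mem_span_singleton.mp (hgen ▸ Submodule.mem_top :
    P.basisVec (k + 1) ∈ Submodule.span A {v})
  have hmem := smul_mem_of_forall_x_smul_mem x hspan hstable b
    (le_sgFilt P.deg (Nat.zero_le k) hv)
  rw [hb] at hmem
  have h1 := P.coeff_eq_zero_of_mem_sgFiltPrev (N := k + 1) hmem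
  rw [coeff_basisVec] at h1
  exact one_ne_zero h1

variable {P P'}

theorem coeff_smul_basisVec_of_pointSeq_eq_smul {μ : ℕ → K}
    (hμ : ∀ k, P'.pointSeq k = μ k • P.pointSeq k) {p : ℕ} {b : A}
    (hb : b ∈ sgFilt (skewPBWDegK K x) p) (q : ℕ) :
    (∏ t ∈ Finset.range q, μ t) * P'.coeff (p + q) (b • P'.basisVec q) =
      (∏ t ∈ Finset.range (p + q), μ t) * P.coeff (p + q) (b • P.basisVec q) := by
  induction p generalizing b with
  | zero =>
    rw [sgFilt_eq_sgFiltPrev_sup] at hb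
    obtain ⟨a, rfl⟩ := Submodule.mem_span_singleton.mp
      (skewPBWDegK_zero_le_span_one x (by simpa [sgFiltPrev] using hb))
    simp
  | succ p ih =>
    rw [sgFilt_eq_sgFiltPrev_sup] at hb
    obtain ⟨f, hf, d, hd, rfl⟩ := Submodule.mem_sup.mp hb
    have hlow : ∀ Q : SGPointModule (skewPBWDegK K x),
        Q.coeff (p + 1 + q) (f • Q.basisVec q) = 0 :=
      fun Q => Q.coeff_eq_zero_of_mem_sgFiltPrev (by
        simpa [add_right_comm p 1 q] using Q.smul_mem_sgFilt hf (Q.basisVec_mem_sgFilt q))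
    simp only [add_smul, map_add, hlow, zero_add]
    rw [add_right_comm p 1 q]
    clear hb
    induction hd using Submodule.span_induction with
    | mem _ h =>
      obtain ⟨α, hα, rfl⟩ := h
      obtain ⟨i, β, hβ, hmul⟩ := exists_skewPBWMonomial_eq_mul x α hα
      have hβmem : skewPBWMonomial x β ∈ sgFilt (skewPBWDegK K x) p :=
        le_sgFilt _ le_rfl (hβ ▸ skewPBWMonomial_mem_skewPBWDegK x β)
      have hmem : ∀ Q : SGPointModule (skewPBWDegK K x),
          skewPBWMonomial x β • Q.basisVec q ∈ sgFilt Q.deg (p + q) :=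
        fun Q => Q.smul_mem_sgFilt hβmem (Q.basisVec_mem_sgFilt q)
      rw [hmul, mul_smul, mul_smul, P.coeff_x_smul i (hmem P), P'.coeff_x_smul i (hmem P'), hμ,
        Finset.prod_range_succ]
      simp only [Pi.smul_apply, smul_eq_mul]
      linear_combination μ (p + q) * P.pointSeq (p + q) i * ih hβmem
    | zero => simp
    | add _ _ _ _ h₁ h₂ => simp only [add_smul, map_add]; linear_combination h₁ + h₂
    | smul a _ _ h =>
      simp only [smul_assoc, LinearMap.map_smul, smul_eq_mul]
      linear_combination a * h

theorem grIso_of_pointSeq_eq_smul {μ : ℕ → K} (hμ₀ : ∀ k, μ k ≠ 0)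
    (hμ : ∀ k, P'.pointSeq k = μ k • P.pointSeq k) : GrIso P P' := by
  have hΛ : ∀ k, ∏ t ∈ Finset.range k, μ t ≠ 0 :=
    fun k => Finset.prod_ne_zero_iff.mpr fun t _ => hμ₀ t
  refine ⟨fun N => (P.grQuotEquiv N).symm ≪≫ₗ LinearEquiv.smulOfNeZero K K _ (hΛ N) ≪≫ₗ
    P'.grQuotEquiv N, fun p N b hb m hm m' hm' hg h₁ h₂ => ?_⟩
  rw [LinearEquiv.trans_apply, LinearEquiv.trans_apply, ← LinearEquiv.eq_symm_apply,
    grQuotEquiv_symm_mk] at hg ⊢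
  simp only [LinearEquiv.smulOfNeZero_apply, grQuotEquiv_symm_mk, smul_eq_mul] at hg ⊢
  rw [P.coeff_smul hb hm, P'.coeff_smul hb hm', ← hg]
  linear_combination -P.coeff N m * coeff_smul_basisVec_of_pointSeq_eq_smul hμ hb N

theorem exists_pointSeq_eq_smul_of_grIso (h : GrIso P P') (k : ℕ) :
    ∃ a : K, P'.pointSeq k = a • P.pointSeq k := by
  obtain ⟨g, hg⟩ := h
  -- `γ N` is the scalar by which `g N` acts on the one-dimensional `Gr(M)_N`
  set γ : ℕ → K := fun N => (P'.grQuotEquiv N).symm (g N (P.grBasisVec N))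
  have hγ : ∀ N, γ N ≠ 0 := fun N => by
    simpa [γ] using P.grBasisVec_ne_zero N
  have hg_mk : ∀ N (m : P.M) (hm : m ∈ sgFilt P.deg N),
      (P'.grQuotEquiv N).symm (g N (Submodule.Quotient.mk ⟨m, hm⟩)) = γ N * P.coeff N m :=
    fun N m hm => by
      rw [P.mk_eq_coeff_smul_grBasisVec hm, map_smul, map_smul, smul_eq_mul, mul_comm]
  have hmem' := Submodule.smul_mem _ (γ k) (P'.basisVec_mem_sgFilt k)
  have hpre : g k (Submodule.Quotient.mk ⟨P.basisVec k, P.basisVec_mem_sgFilt k⟩) =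
      Submodule.Quotient.mk ⟨γ k • P'.basisVec k, hmem'⟩ :=
    (P'.grQuotEquiv k).symm.injective (by
      rw [grQuotEquiv_symm_mk, map_smul, coeff_basisVec, smul_eq_mul, mul_one]
      rfl)
  have hrel : ∀ i, γ (k + 1) * P.pointSeq k i = γ k * P'.pointSeq k i := fun i => by
    have hx := P.smul_mem_sgFilt (x_mem_sgFilt_one x i) (P.basisVec_mem_sgFilt k)
    have hx' := P'.smul_mem_sgFilt (x_mem_sgFilt_one x i) (P'.basisVec_mem_sgFilt k)
    have h := congrArg (P'.grQuotEquiv (1 + k)).symm (hg 1 k (x i) (x_mem_sgFilt_one x i) _ _ _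
      hmem' hpre hx (by rw [smul_comm]; exact Submodule.smul_mem _ _ hx'))
    rw [hg_mk, grQuotEquiv_symm_mk, smul_comm (x i) (γ k), LinearMap.map_smul,
      add_comm 1 k] at h
    simpa [pointSeq] using h
  refine ⟨γ (k + 1) / γ k, funext fun i => ?_⟩
  rw [Pi.smul_apply, smul_eq_mul, div_mul_eq_mul_div, hrel, mul_div_cancel_left₀ _ (hγ k)]

theorem pointSeq_eq_smul_of_pointSeq_zero_eq_smul
    (hspan : Submodule.span K (Set.range (skewPBWMonomial x)) = ⊤)
    {c : Fin n → Fin n → K} (hc : ∀ i j : Fin n, i < j → c i j ≠ 0)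
    (hrel : ∀ i j : Fin n, i < j →
      x j * x i - c i j • (x i * x j) ∈ Submodule.span K ({(1 : A)} ∪ Set.range x))
    (h₀ : ∃ a : K, P'.pointSeq 0 = a • P.pointSeq 0) (k : ℕ) :
    ∃ a : K, a ≠ 0 ∧ P'.pointSeq k = a • P.pointSeq k := by
  have hne : ∀ {k} {a : K}, P'.pointSeq k = a • P.pointSeq k → a ≠ 0 := fun h ha =>
    P'.pointSeq_ne_zero hspan _ (by rw [h, ha, zero_smul])
  induction k with
  | zero => obtain ⟨a, ha⟩ := h₀; exact ⟨a, hne ha, ha⟩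
  | succ k ih =>
    obtain ⟨a, ha₀, ha⟩ := ih
    have h' := P'.pointSeq_skewCompatible c hrel k
    rw [ha] at h'
    obtain ⟨b, hb⟩ := (P.pointSeq_skewCompatible c hrel k).exists_eq_smul hc
      (h'.of_smul_right ha₀) (P.pointSeq_ne_zero hspan k) (P.pointSeq_ne_zero hspan (k + 1))
    exact ⟨b, hne hb, hb⟩

end SGPointModule

theorem skewPBW_pointModules_inject_into_X2_general {K : Type u} {A : Type v} [Field K]
    [Ring A] [Algebra K A] {n : ℕ} (x : Fin n → A)
    -- A is a skew PBW extension of K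
    (hspan : Submodule.span K (Set.range (skewPBWMonomial x)) = ⊤)
    (c : Fin n → Fin n → K) (hc : ∀ i j : Fin n, i < j → c i j ≠ 0)
    (hrel : ∀ i j : Fin n, i < j →
      x j * x i - c i j • (x i * x j) ∈ Submodule.span K ({(1 : A)} ∪ Set.range x)) :
    ∃ f : Quot (SGPointModule.GrIso (Bdeg := skewPBWDegK K x)) →
        {pq : Projectivization K (Fin n → K) × Projectivization K (Fin n → K) //
          pq ∈ {pq : Projectivization K (Fin n → K) × Projectivization K (Fin n → K) |
            ∃ (v : Fin n → K) (hv : v ≠ 0) (w : Fin n → K) (hw : w ≠ 0),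
              pq = (Projectivization.mk K v hv, Projectivization.mk K w hw) ∧
              ∀ i j : Fin n, i < j → v j * w i = c i j * (v i * w j)}},
      Function.Injective f := by
  have hne := fun (P : SGPointModule (skewPBWDegK K x)) => P.pointSeq_ne_zero hspan
  refine ⟨Quot.lift (fun P => ⟨(.mk K (P.pointSeq 1) (hne P 1), .mk K (P.pointSeq 0) (hne P 0)),
    _, _, _, _, rfl, P.pointSeq_skewCompatible c hrel 0⟩) fun P P' h => ?_, ?_⟩
  · have hmk : ∀ k, Projectivization.mk K (P.pointSeq k) (hne P k) =
        Projectivization.mk K (P'.pointSeq k) (hne P' k) := fun k => by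
      obtain ⟨a, ha⟩ := SGPointModule.exists_pointSeq_eq_smul_of_grIso h k
      exact ((Projectivization.mk_eq_mk_iff' K _ _ _ _).mpr ⟨a, ha.symm⟩).symm
    exact Subtype.ext (Prod.ext (hmk 1) (hmk 0))
  · rintro ⟨P⟩ ⟨P'⟩ h
    obtain ⟨a, ha⟩ := (Projectivization.mk_eq_mk_iff' K _ _ _ _).mp (congrArg (·.1.2) h).symm
    choose μ hμ₀ hμ using
      SGPointModule.pointSeq_eq_smul_of_pointSeq_zero_eq_smul hspan hc hrel ⟨a, ha.symm⟩
    exact Quot.sound (SGPointModule.grIso_of_pointSeq_eq_smul hμ₀ hμ)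

/-- let `A` be a skew PBW extension of a field `K` (with `A` a
`K`-algebra) with constants `c_{ij}` (`i < j`), regarded as a finitely semi-graded
`K`-algebra. Then there is an injective function from `P(A)/∼` (point modules modulo
`Gr(M) ≅ Gr(M')`) into
`X₂ = {([v],[w]) ∈ ℙ^{n−1}(K) × ℙ^{n−1}(K) : vⱼwᵢ = c_{ij} vᵢwⱼ for all i < j}`;
in particular `m₀ = 2` works. -/
theorem skewPBW_pointModules_inject_into_X2 {K : Type u} {A : Type v} [Field K]
    [Ring A] [Algebra K A] {n : ℕ} (x : Fin n → A)
    -- A is a skew PBW extension of K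
    (hli : LinearIndependent K (skewPBWMonomial x))
    (hspan : Submodule.span K (Set.range (skewPBWMonomial x)) = ⊤)
    (c : Fin n → Fin n → K) (hc : ∀ i j : Fin n, i < j → c i j ≠ 0)
    (hrel : ∀ i j : Fin n, i < j →
      x j * x i - c i j • (x i * x j) ∈ Submodule.span K ({(1 : A)} ∪ Set.range x)) :
    ∃ f : Quot (SGPointModule.GrIso (Bdeg := skewPBWDegK K x)) →
        {pq : Projectivization K (Fin n → K) × Projectivization K (Fin n → K) //
          pq ∈ {pq : Projectivization K (Fin n → K) × Projectivization K (Fin n → K) |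
            ∃ (v : Fin n → K) (hv : v ≠ 0) (w : Fin n → K) (hw : w ≠ 0),
              pq = (Projectivization.mk K v hv, Projectivization.mk K w hw) ∧
              ∀ i j : Fin n, i < j → v j * w i = c i j * (v i * w j)}},
      Function.Injective f :=
  skewPBW_pointModules_inject_into_X2_general x hspan c hc hrel
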